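/- arXiv:1406.3624 — 7 statements merged into one kernel-verified Lean document; each statement's English description precedes it below -/
import Mathlib

section
/- If f, g, h : E → F satisfy ‖(1/|K|)·∑_{k∈K} f(x + k·y) − g(x) − h(y)‖_β ≤ φ(x,y) for all x, y ∈ E, and φ̂(x) := (1/|K|)·∑_{k∈K} f(k·x), then ‖(1/|K|)·∑_{k'∈K} φ̂(x + k'·y) − φ̂(x) − φ̂(y) + g(0) + h(0)‖_β ≤ ψ(x,y), where ψ(x,y) = (|K|/|K|^β)·φ(0,y) + (1/|K|^β)·∑_{k∈K}[φ(k·x, y) + φ(k·x, 0)]. -/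
/-!
Write `D(x, y)` for the averaged Cauchy defect `avg_k f (x + k • y) - g x - h y`. Since
`k • (x + k' • y) = k • x + (k * k') • y` and the average over `k'` is invariant under
`k' ↦ k * k'`, the expression on the left is exactly
`avg_k D(k • x, y) - avg_k D(k • x, 0) - D(0, y)`. The β-homogeneity turns each average into
`|K| ^ (-β)` times a sum of values of `φ`, and `1 ≤ |K| ^ (1 - β)` absorbs the last term.
-/

open Finset

noncomputable section

section GroupAverage

variable {K : Type*} [Fintype K] {F : Type*} [AddCommGroup F] [Module ℝ F]

def groupAvg (v : K → F) : F := (Fintype.card K : ℝ)⁻¹ • ∑ k, v k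

theorem groupAvg_const [Nonempty K] (c : F) : groupAvg (fun _ : K => c) = c := by
  have hn : (Fintype.card K : ℝ) ≠ 0 := Nat.cast_ne_zero.mpr Fintype.card_ne_zero
  rw [groupAvg, sum_const, card_univ, ← Nat.cast_smul_eq_nsmul ℝ, inv_smul_smul₀ hn]

theorem groupAvg_sub (v w : K → F) :
    groupAvg (fun k => v k - w k) = groupAvg v - groupAvg w := by
  simp only [groupAvg, sum_sub_distrib, smul_sub]

theorem groupAvg_groupAvg_comm (w : K → K → F) :
    groupAvg (fun i => groupAvg fun j => w i j) = groupAvg (fun j => groupAvg fun i => w i j) := by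
  simp only [groupAvg, ← smul_sum]
  rw [sum_comm]

theorem groupAvg_comp_mul_left {G : Type*} [Group G] [Fintype G] (g : G) (v : G → F) :
    groupAvg (fun g' => v (g * g')) = groupAvg v := by
  simp only [groupAvg]
  exact congrArg _ (Equiv.sum_comp (Equiv.mulLeft g) v)

end GroupAverage

section CauchyDefect

variable (K : Type*) [Group K] [Fintype K] {E : Type*} [AddMonoid E] [DistribMulAction K E]
  {F : Type*} [AddCommGroup F] [Module ℝ F]

def orbitAvg (f : E → F) (x : E) : F := groupAvg fun k : K => f (k • x)

def cauchyDefect (f g h : E → F) (x y : E) : F :=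
  groupAvg (fun k : K => f (x + k • y)) - g x - h y

variable {K}

theorem groupAvg_orbitAvg_add_smul (f : E → F) (x y : E) :
    groupAvg (fun k' : K => orbitAvg K f (x + k' • y))
      = groupAvg fun k : K => groupAvg fun k' : K => f (k • x + k' • y) := by
  simp only [orbitAvg, smul_add, smul_smul]
  rw [groupAvg_groupAvg_comm fun k' k => f (k • x + (k * k') • y)]
  congr 1
  funext k
  exact groupAvg_comp_mul_left k fun k' => f (k • x + k' • y)

theorem cauchyDefect_zero_right (f g h : E → F) (x : E) :
    cauchyDefect K f g h x 0 = f x - g x - h 0 := by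
  simp only [cauchyDefect, smul_zero, add_zero, groupAvg_const]

theorem groupAvg_orbitAvg_sub_eq_cauchyDefect (f g h : E → F) (x y : E) :
    groupAvg (fun k' : K => orbitAvg K f (x + k' • y)) - orbitAvg K f x - orbitAvg K f y
        + g 0 + h 0
      = groupAvg (fun k : K => cauchyDefect K f g h (k • x) y)
        - groupAvg (fun k : K => cauchyDefect K f g h (k • x) 0) - cauchyDefect K f g h 0 y := by
  simp only [groupAvg_orbitAvg_add_smul, cauchyDefect_zero_right, groupAvg_sub, groupAvg_const]
  simp only [cauchyDefect, groupAvg_sub, groupAvg_const, zero_add, orbitAvg]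
  abel

end CauchyDefect

section BetaHomogeneous

variable {F : Type*} [AddCommGroup F] [Module ℝ F] {β : ℝ} {N : F → ℝ}

theorem apply_neg_of_rpow_homogeneous (hNs : ∀ (r : ℝ) (z : F), N (r • z) = |r| ^ β * N z)
    (z : F) : N (-z) = N z := by
  simpa using hNs (-1) z

theorem apply_sub_sub_le (hNs : ∀ (r : ℝ) (z : F), N (r • z) = |r| ^ β * N z)
    (hNt : ∀ z w : F, N (z + w) ≤ N z + N w) (a b c : F) :
    N (a - b - c) ≤ N a + N b + N c := by
  have hab := hNt a (-b)
  have habc := hNt (a - b) (-c)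
  rw [apply_neg_of_rpow_homogeneous hNs, ← sub_eq_add_neg] at hab habc
  linarith

theorem apply_groupAvg_le {K : Type*} [Fintype K] [Nonempty K]
    (hNs : ∀ (r : ℝ) (z : F), N (r • z) = |r| ^ β * N z)
    (hNt : ∀ z w : F, N (z + w) ≤ N z + N w) (v : K → F) :
    N (groupAvg v) ≤ ((Fintype.card K : ℝ) ^ β)⁻¹ * ∑ k, N (v k) := by
  have hn : (0 : ℝ) < Fintype.card K := Nat.cast_pos.mpr Fintype.card_pos
  rw [groupAvg, hNs, abs_of_pos (inv_pos.mpr hn), Real.inv_rpow hn.le]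
  gcongr
  exact le_sum_nonempty_of_subadditive N hNt univ_nonempty v

end BetaHomogeneous

theorem le_div_rpow_mul_self {n β a : ℝ} (hn : 1 ≤ n) (hβ : β ≤ 1) (ha : 0 ≤ a) :
    a ≤ n / n ^ β * a := by
  have hnβ : n ^ β ≤ n := by
    simpa using Real.rpow_le_rpow_of_exponent_le hn hβ
  exact le_mul_of_one_le_left ha ((one_le_div (by positivity)).mpr hnβ)

theorem stmt_3_general
    {E : Type*} [AddCommGroup E]
    {F : Type*} [AddCommGroup F] [Module ℝ F]
    {β : ℝ} (hβ1 : β ≤ 1)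
    (Nb : F → ℝ)
    (hNs : ∀ (r : ℝ) (z : F), Nb (r • z) = |r| ^ β * Nb z)
    (hNt : ∀ z w : F, Nb (z + w) ≤ Nb z + Nb w)
    {K : Type*} [CommGroup K] [Fintype K] [DistribMulAction K E]
    (φ : E → E → ℝ) (hφ : ∀ x y, 0 ≤ φ x y)
    (f g h : E → F)
    (hfgh : ∀ x y : E,
      Nb ((Fintype.card K : ℝ)⁻¹ • (∑ k : K, f (x + k • y)) - g x - h y) ≤ φ x y)
    (φhat : E → F)
    (hφhat : ∀ x : E, φhat x = (Fintype.card K : ℝ)⁻¹ • (∑ k : K, f (k • x)))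
    (ψ : E → E → ℝ)
    (hψ : ∀ x y : E, ψ x y =
      (Fintype.card K : ℝ) / (Fintype.card K : ℝ) ^ β * φ 0 y
        + ((Fintype.card K : ℝ) ^ β)⁻¹ * ∑ k : K, (φ (k • x) y + φ (k • x) 0)) :
    ∀ x y : E,
      Nb ((Fintype.card K : ℝ)⁻¹ • (∑ k' : K, φhat (x + k' • y)) - φhat x - φhat y
          + g 0 + h 0) ≤ ψ x y := by
  intro x y
  have hφhat_eq : φhat = orbitAvg K f := funext hφhat
  have hdefect : ∀ a b, Nb (cauchyDefect K f g h a b) ≤ φ a b := hfgh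
  have hcard : (1 : ℝ) ≤ Fintype.card K := Nat.one_le_cast.mpr Fintype.card_pos
  calc _ = Nb (groupAvg (fun k : K => cauchyDefect K f g h (k • x) y)
          - groupAvg (fun k : K => cauchyDefect K f g h (k • x) 0) - cauchyDefect K f g h 0 y) := by
        rw [hφhat_eq, ← groupAvg_orbitAvg_sub_eq_cauchyDefect]
        rfl
    _ ≤ ((Fintype.card K : ℝ) ^ β)⁻¹ * ∑ k : K, φ (k • x) y
          + ((Fintype.card K : ℝ) ^ β)⁻¹ * ∑ k : K, φ (k • x) 0 + φ 0 y := by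
        refine (apply_sub_sub_le hNs hNt _ _ _).trans ?_
        gcongr
        · exact (apply_groupAvg_le hNs hNt _).trans (by gcongr with k; exact hdefect _ _)
        · exact (apply_groupAvg_le hNs hNt _).trans (by gcongr with k; exact hdefect _ _)
        · exact hdefect 0 y
    _ ≤ ψ x y := by
        rw [hψ, sum_add_distrib, mul_add]
        linarith [le_div_rpow_mul_self hcard hβ1 (hφ 0 y)]

theorem stmt_3
    {E : Type*} [AddCommGroup E] [Module ℝ E]
    {F : Type*} [AddCommGroup F] [Module ℝ F]
    {β : ℝ} (hβ0 : 0 < β) (hβ1 : β ≤ 1)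
    (Nb : F → ℝ)
    (hNnn : ∀ z : F, 0 ≤ Nb z)
    (hN0 : ∀ z : F, Nb z = 0 ↔ z = 0)
    (hNs : ∀ (r : ℝ) (z : F), Nb (r • z) = |r| ^ β * Nb z)
    (hNt : ∀ z w : F, Nb (z + w) ≤ Nb z + Nb w)
    {K : Type*} [CommGroup K] [Fintype K] [DistribMulAction K E]
    (φ : E → E → ℝ) (hφ : ∀ x y, 0 ≤ φ x y)
    (f g h : E → F)
    (hfgh : ∀ x y : E,
      Nb ((Fintype.card K : ℝ)⁻¹ • (∑ k : K, f (x + k • y)) - g x - h y) ≤ φ x y)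
    (φhat : E → F)
    (hφhat : ∀ x : E, φhat x = (Fintype.card K : ℝ)⁻¹ • (∑ k : K, f (k • x)))
    (ψ : E → E → ℝ)
    (hψ : ∀ x y : E, ψ x y =
      (Fintype.card K : ℝ) / (Fintype.card K : ℝ) ^ β * φ 0 y
        + ((Fintype.card K : ℝ) ^ β)⁻¹ * ∑ k : K, (φ (k • x) y + φ (k • x) 0)) :
    ∀ x y : E,
      Nb ((Fintype.card K : ℝ)⁻¹ • (∑ k' : K, φhat (x + k' • y)) - φhat x - φhat y
          + g 0 + h 0) ≤ ψ x y :=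
  stmt_3_general hβ1 Nb hNs hNt φ hφ f g h hfgh φhat hφhat ψ hψ
end
end

section
/- If φ : E × E → [0,∞) satisfies ∑_{k∈K} φ(x + k·x, y + k·y) ≤ (2|K|)^β·L·φ(x,y) for all x, y ∈ E and some L ∈ [0,1), then the function ψ(x,y) = (|K|/|K|^β)·φ(0,y) + (1/|K|^β)·∑_{k∈K}[φ(k·x, y) + φ(k·x, 0)] satisfies the same inequality: ∑_{k∈K} ψ(x + k·x, y + k·y) ≤ (2|K|)^β·L·ψ(x,y) for all x, y ∈ E. -/
theorem stmt_4
    {E : Type*} [AddCommGroup E]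
    {K : Type*} [CommGroup K] [Fintype K] [DistribMulAction K E]
    {β : ℝ} (hβ0 : 0 < β) (hβ1 : β ≤ 1)
    (φ : E → E → ℝ) (hφ : ∀ x y, 0 ≤ φ x y)
    (L : ℝ) (hL0 : 0 ≤ L) (hL1 : L < 1)
    (hcontr : ∀ x y : E,
      (∑ k : K, φ (x + k • x) (y + k • y)) ≤ (2 * (Fintype.card K : ℝ)) ^ β * L * φ x y)
    (ψ : E → E → ℝ)
    (hψ : ∀ x y : E, ψ x y =
      (Fintype.card K : ℝ) / (Fintype.card K : ℝ) ^ β * φ 0 y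
        + ((Fintype.card K : ℝ) ^ β)⁻¹ * ∑ k : K, (φ (k • x) y + φ (k • x) 0)) :
    ∀ x y : E,
      (∑ k : K, ψ (x + k • x) (y + k • y)) ≤ (2 * (Fintype.card K : ℝ)) ^ β * L * ψ x y := by
  intro x y
  set n : ℝ := (Fintype.card K : ℝ) with hn'
  have hn : (0:ℝ) ≤ n := Nat.cast_nonneg _
  set C : ℝ := (2 * n) ^ β * L with hC'
  have hA : 0 ≤ n / n ^ β := div_nonneg hn (Real.rpow_nonneg hn β)
  have hB : 0 ≤ (n ^ β)⁻¹ := inv_nonneg.2 (Real.rpow_nonneg hn β)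
  have hsm : ∀ j k : K, j • (x + k • x) = j • x + k • (j • x) := fun j k => by
    rw [smul_add, smul_smul, smul_smul, mul_comm]
  have h0 : (∑ k : K, φ 0 (y + k • y)) ≤ C * φ 0 y := by
    have := hcontr 0 y
    simpa using this
  have h1 : ∀ j : K, (∑ k : K, φ (j • (x + k • x)) (y + k • y)) ≤ C * φ (j • x) y := by
    intro j
    have h := hcontr (j • x) y
    calc (∑ k : K, φ (j • (x + k • x)) (y + k • y))
        = ∑ k : K, φ (j • x + k • (j • x)) (y + k • y) :=
          Finset.sum_congr rfl fun k _ => by rw [hsm j k]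
      _ ≤ C * φ (j • x) y := h
  have h2 : ∀ j : K, (∑ k : K, φ (j • (x + k • x)) 0) ≤ C * φ (j • x) 0 := by
    intro j
    have h := hcontr (j • x) 0
    calc (∑ k : K, φ (j • (x + k • x)) 0)
        = ∑ k : K, φ (j • x + k • (j • x)) (0 + k • (0:E)) :=
          Finset.sum_congr rfl fun k _ => by rw [hsm j k]; simp
      _ ≤ C * φ (j • x) 0 := h
  calc (∑ k : K, ψ (x + k • x) (y + k • y))
      = n / n ^ β * (∑ k : K, φ 0 (y + k • y))
        + (n ^ β)⁻¹ * ∑ j : K, ((∑ k : K, φ (j • (x + k • x)) (y + k • y))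
            + (∑ k : K, φ (j • (x + k • x)) 0)) := by
        simp only [hψ]
        rw [Finset.sum_add_distrib, ← Finset.mul_sum, ← Finset.mul_sum, Finset.sum_comm]
        simp [Finset.sum_add_distrib]
    _ ≤ n / n ^ β * (C * φ 0 y)
        + (n ^ β)⁻¹ * ∑ j : K, (C * φ (j • x) y + C * φ (j • x) 0) := by
        gcongr with j hj
        · exact h1 j
        · exact h2 j
    _ = C * ψ x y := by
        rw [hψ]
        simp only [mul_add, Finset.mul_sum]
        congr 1
        · ring
        · exact Finset.sum_congr rfl fun j _ => by ring
end

section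
/- (Diaz–Margolis fixed point alternative) Let (X,d) be a complete generalized metric space (d may take the value ∞) and J : X → X strictly contractive with Lipschitz constant L < 1. If there exists a nonnegative integer k and x ∈ X with d(J^k x, J^{k+1} x) < ∞, then: (1) the sequence J^n x converges to a fixed point x* of J; (2) x* is the unique fixed point of J in the set Y = {y ∈ X : d(J^k x, y) < ∞}; (3) d(y, x*) ≤ d(y, Jy)/(1−L) for all y ∈ Y. -/
open scoped ENNReal NNReal
open Filter Topology Function

/-!
An `ℝ≥0∞`-valued metric is exactly an `EMetricSpace` structure, so this is the Banach fixed
point theorem for extended metric spaces applied to the orbit of `J^[k] x`: its first step has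
finite length, so the orbit converges geometrically to a fixed point `z` at finite distance
from `J^[k] x`. Any `y` at finite distance from `J^[k] x` is then at finite distance from `z`,
so `d y z ≤ d y (J y) + L * d y z` can be solved for `d y z`; this is the a posteriori bound,
and for a fixed point `y` it gives `y = z`.
-/

noncomputable abbrev EMetricSpace.ofEDist {X : Type*} (d : X → X → ℝ≥0∞)
    (hd0 : ∀ a b : X, d a b = 0 ↔ a = b)
    (hdsymm : ∀ a b : X, d a b = d b a) (hdtri : ∀ a b c : X, d a c ≤ d a b + d b c) :
    EMetricSpace X where
  edist := d
  edist_self a := (hd0 a a).2 rfl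
  edist_comm := hdsymm
  edist_triangle := hdtri
  eq_of_edist_eq_zero := (hd0 _ _).1

theorem EMetric.completeSpace_of_forall_tendsto {α : Type*} [PseudoEMetricSpace α]
    (h : ∀ u : ℕ → α, (∀ ε > 0, ∃ N, ∀ m ≥ N, ∀ n ≥ N, edist (u m) (u n) < ε) →
      ∃ a, ∀ ε > 0, ∃ N, ∀ n ≥ N, edist (u n) a < ε) :
    CompleteSpace α :=
  EMetric.complete_of_cauchySeq_tendsto fun u hu ↦
    (h u (EMetric.cauchySeq_iff.1 hu)).imp fun _ ↦ EMetric.tendsto_atTop.2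

theorem ContractingWith.fixedPoint_alternative {α : Type*} [EMetricSpace α] [CompleteSpace α]
    {K : ℝ≥0} {f : α → α} (hf : ContractingWith K f) {x : α} {k : ℕ}
    (hx : edist (f^[k] x) (f^[k + 1] x) ≠ ∞) :
    ∃ z, IsFixedPt f z ∧ Tendsto (fun n ↦ f^[n] x) atTop (𝓝 z) ∧
      (∀ y, edist (f^[k] x) y ≠ ∞ → IsFixedPt f y → y = z) ∧
      ∀ y, edist (f^[k] x) y ≠ ∞ → edist y z ≤ edist y (f y) / (1 - K) := by
  set x₀ := f^[k] x
  have hx₀ : edist x₀ (f x₀) ≠ ∞ := by rwa [← iterate_succ_apply' f k x]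
  set z := efixedPoint f hf x₀ hx₀
  have hz : IsFixedPt f z := hf.efixedPoint_isFixedPt hx₀
  have edist_ne_top {y} (hy : edist x₀ y ≠ ∞) : edist y z ≠ ∞ :=
    (edist_triangle y x₀ z).trans_lt
      (ENNReal.add_lt_top.2 ⟨(edist_comm y x₀ ▸ hy).lt_top, hf.edist_efixedPoint_lt_top hx₀⟩) |>.ne
  refine ⟨z, hz, ?_, fun y hy hfy ↦ ?_, fun y hy ↦ hf.edist_le_of_fixedPoint (edist_ne_top hy) hz⟩
  · refine (tendsto_add_atTop_iff_nat k).1 ?_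
    simpa only [iterate_add_apply] using hf.tendsto_iterate_efixedPoint hx₀
  · exact (hf.eq_or_edist_eq_top_of_fixedPoints hfy hz).resolve_right (edist_ne_top hy)

theorem stmt_7
    {X : Type*} (d : X → X → ℝ≥0∞)
    (hd0 : ∀ a b : X, d a b = 0 ↔ a = b)
    (hdsymm : ∀ a b : X, d a b = d b a)
    (hdtri : ∀ a b c : X, d a c ≤ d a b + d b c)
    (hcomplete : ∀ u : ℕ → X,
      (∀ ε : ℝ≥0∞, 0 < ε → ∃ N, ∀ m ≥ N, ∀ n ≥ N, d (u m) (u n) < ε) →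
      ∃ l : X, ∀ ε : ℝ≥0∞, 0 < ε → ∃ N, ∀ n ≥ N, d (u n) l < ε)
    (J : X → X) (L : ℝ≥0) (hL : L < 1)
    (hcontr : ∀ a b : X, d (J a) (J b) ≤ (L : ℝ≥0∞) * d a b)
    (k : ℕ) (x : X) (hfin : d (J^[k] x) (J^[k + 1] x) < ⊤) :
    ∃ xstar : X, J xstar = xstar ∧
      (∀ ε : ℝ≥0∞, 0 < ε → ∃ N, ∀ n ≥ N, d (J^[n] x) xstar < ε) ∧
      (∀ y : X, d (J^[k] x) y < ⊤ → J y = y → y = xstar) ∧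
      (∀ y : X, d (J^[k] x) y < ⊤ → d y xstar ≤ d y (J y) / (1 - (L : ℝ≥0∞))) := by
  let _ : EMetricSpace X := EMetricSpace.ofEDist d hd0 hdsymm hdtri
  have : CompleteSpace X := EMetric.completeSpace_of_forall_tendsto hcomplete
  obtain ⟨xstar, hfix, hlim, huniq, hbound⟩ :=
    ContractingWith.fixedPoint_alternative (K := L) (f := J) ⟨hL, hcontr⟩ hfin.ne
  exact ⟨xstar, hfix, EMetric.tendsto_atTop.1 hlim, fun y hy ↦ huniq y hy.ne,
    fun y hy ↦ hbound y hy.ne⟩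
end

section
/- Under the hypotheses of the main stability theorem (‖(1/|K|)·∑_{k∈K} f(x+k·y) − g(x) − h(y)‖_β ≤ φ(x,y) and ∑_{k∈K} φ(x+k·x, y+k·y) ≤ (2|K|)^β·L·φ(x,y) with L < 1), the function h satisfies ‖h(x) − q(x) − h(0)‖_β ≤ (1/2^β)·(1/(1−L))·ψ(x,x) + φ(0,x) for all x ∈ E, where q is the unique generalized quadratic solution approximating f and ψ(x,y) = (|K|/|K|^β)·φ(0,y) + (1/|K|^β)·∑_{k∈K}[φ(k·x,y)+φ(k·x,0)]. -/
/-!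
Setting `x = 0` in the hypothesis shows that the orbit average
`H z = |K|⁻¹ ∑ f (k • z) - g 0 - h 0` is within `φ 0 z` of `h z - h 0`, and expanding shows that
`H` solves the equation up to `ψ`. The operator `T v z = (2|K|)⁻¹ ∑ v (z + k • z)` fixes solutions,
and since `ψ` inherits the contraction property of `φ`, each application of `T` multiplies by `L`
both the defect of the equation and the `ψ`-weighted distance between consecutive iterates.
Hence `Tⁿ H` converges pointwise to a solution `q` with `‖H x - q x‖ ≤ ψ x x / (2^β (1 - L))`.
A β-norm is in particular an additive group norm, so the limits are taken in the induced metric.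
-/

open Finset Filter Topology

noncomputable section

namespace KQuadratic

variable {E : Type*} [AddCommGroup E]

theorem smul_add_smul_comm {K : Type*} [CommMonoid K] [DistribMulAction K E] (j k : K) (x y : E) :
    j • (x + k • y) = j • x + k • (j • y) := by
  rw [smul_add, smul_smul, smul_smul, mul_comm]

section Algebra

variable (K : Type*) [CommGroup K] [Fintype K] [DistribMulAction K E]
variable {F : Type*} [AddCommGroup F] [Module ℝ F]

/-- `defect K f g h` is the Pexider form of the equation: `q` is a solution iff
`defect K q q q = 0`. -/
def defect (f g h : E → F) (x y : E) : F :=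
  (Fintype.card K : ℝ)⁻¹ • ∑ k : K, f (x + k • y) - g x - h y

def orbitApprox (f g h : E → F) (z : E) : F :=
  (Fintype.card K : ℝ)⁻¹ • ∑ k : K, f (k • z) - g 0 - h 0

/-- Solutions are fixed points: putting `y = x` in the equation gives
`∑ k, q (x + k • x) = 2 |K| q x`. -/
def doublingAvg (v : E → F) (z : E) : F :=
  (2 * (Fintype.card K : ℝ))⁻¹ • ∑ k : K, v (z + k • z)

def IsContractiveControl (β L : ℝ) (φ : E → E → ℝ) : Prop :=
  ∀ x y, ∑ k : K, φ (x + k • x) (y + k • y) ≤ (2 * (Fintype.card K : ℝ)) ^ β * L * φ x y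

def controlFn (β : ℝ) (φ : E → E → ℝ) (x y : E) : ℝ :=
  (Fintype.card K : ℝ) / (Fintype.card K : ℝ) ^ β * φ 0 y
    + ((Fintype.card K : ℝ) ^ β)⁻¹ * ∑ k : K, (φ (k • x) y + φ (k • x) 0)

variable {K}

theorem inv_card_smul_sum_const (z : F) : (Fintype.card K : ℝ)⁻¹ • ∑ _k : K, z = z := by
  rw [sum_const, card_univ, ← Nat.cast_smul_eq_nsmul ℝ, smul_smul,
    inv_mul_cancel₀ (Nat.cast_ne_zero.2 Fintype.card_ne_zero), one_smul]

theorem defect_doublingAvg (v : E → F) (x y : E) :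
    defect K (doublingAvg K v) (doublingAvg K v) (doublingAvg K v) x y =
      (2 * (Fintype.card K : ℝ))⁻¹ • ∑ j : K, defect K v v v (x + j • x) (y + j • y) := by
  have hswap : ∀ j k : K, x + k • y + j • (x + k • y) = x + j • x + k • (y + j • y) := by
    intro j k
    rw [smul_add_smul_comm, smul_add]
    abel
  simp only [defect, doublingAvg, hswap, smul_sum, sum_sub_distrib, smul_sub, smul_smul,
    mul_comm (Fintype.card K : ℝ)⁻¹ (2 * (Fintype.card K : ℝ))⁻¹]
  rw [sum_comm]

theorem doublingAvg_sub_self (v : E → F) (x : E) :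
    doublingAvg K v x - v x = (2 : ℝ)⁻¹ • defect K v v v x x := by
  simp only [doublingAvg, defect, mul_inv]
  module

theorem doublingAvg_sub (v w : E → F) (x : E) :
    doublingAvg K v x - doublingAvg K w x =
      (2 * (Fintype.card K : ℝ))⁻¹ • ∑ k : K, (v - w) (x + k • x) := by
  simp only [doublingAvg, Pi.sub_apply, sum_sub_distrib, smul_sub]

theorem orbitApprox_eq (f g h : E → F) (z : E) :
    orbitApprox K f g h z = defect K f g h 0 z + h z - h 0 := by
  simp only [orbitApprox, defect, zero_add]
  abel

theorem defect_orbitApprox (f g h : E → F) (x y : E) :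
    defect K (orbitApprox K f g h) (orbitApprox K f g h) (orbitApprox K f g h) x y =
      (Fintype.card K : ℝ)⁻¹ • ∑ j : K, defect K f g h (j • x) y
        - (Fintype.card K : ℝ)⁻¹ • ∑ j : K, defect K f g h (j • x) 0 - defect K f g h 0 y := by
  have hreindex : ∀ j : K, ∑ k : K, f (j • (x + k • y)) = ∑ k : K, f (j • x + k • y) :=
    fun j => Fintype.sum_equiv (Equiv.mulLeft j) _ _ fun k => by simp [smul_add, smul_smul]
  have hdouble : (Fintype.card K : ℝ)⁻¹ • ∑ k : K, (Fintype.card K : ℝ)⁻¹ • ∑ j : K,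
        f (j • (x + k • y)) =
      (Fintype.card K : ℝ)⁻¹ • ∑ j : K, (Fintype.card K : ℝ)⁻¹ • ∑ k : K, f (j • x + k • y) := by
    simp only [← hreindex, ← smul_sum]
    rw [sum_comm]
  simp only [defect, orbitApprox, sum_sub_distrib, smul_sub, inv_card_smul_sum_const, hdouble,
    smul_zero, add_zero, zero_add]
  abel

theorem tendsto_defect [TopologicalSpace F] [IsTopologicalAddGroup F] [ContinuousConstSMul ℝ F]
    {ι : Type*} {l : Filter ι} {u : ι → E → F} {q : E → F}
    (hu : ∀ z, Tendsto (fun n => u n z) l (𝓝 (q z))) (x y : E) :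
    Tendsto (fun n => defect K (u n) (u n) (u n) x y) l (𝓝 (defect K q q q x y)) :=
  (((tendsto_finsetSum _ fun _ _ => hu _).const_smul _).sub (hu x)).sub (hu y)

theorem IsContractiveControl.controlFn {β L : ℝ} {φ : E → E → ℝ}
    (hφ : IsContractiveControl K β L φ) : IsContractiveControl K β L (controlFn K β φ) := by
  intro x y
  set M : ℝ := (2 * (Fintype.card K : ℝ)) ^ β * L
  have h0 : ∑ k : K, φ 0 (y + k • y) ≤ M * φ 0 y := by simpa using hφ 0 y
  have hj : ∀ j : K, ∑ k : K, (φ (j • (x + k • x)) (y + k • y) + φ (j • (x + k • x)) 0)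
      ≤ M * (φ (j • x) y + φ (j • x) 0) := by
    intro j
    have hy := hφ (j • x) y
    have hz := hφ (j • x) 0
    simp only [smul_zero, add_zero] at hz
    simp only [smul_add_smul_comm, sum_add_distrib]
    linarith
  calc ∑ k : K, KQuadratic.controlFn K β φ (x + k • x) (y + k • y)
      = (Fintype.card K : ℝ) / (Fintype.card K : ℝ) ^ β * ∑ k : K, φ 0 (y + k • y)
          + ((Fintype.card K : ℝ) ^ β)⁻¹ * ∑ j : K, ∑ k : K,
            (φ (j • (x + k • x)) (y + k • y) + φ (j • (x + k • x)) 0) := by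
        simp only [KQuadratic.controlFn, sum_add_distrib, ← mul_sum]
        rw [sum_comm (s := univ) (f := fun k j => φ (j • (x + k • x)) (y + k • y)),
          sum_comm (s := univ) (f := fun k j => φ (j • (x + k • x)) 0)]
    _ ≤ (Fintype.card K : ℝ) / (Fintype.card K : ℝ) ^ β * (M * φ 0 y)
          + ((Fintype.card K : ℝ) ^ β)⁻¹ * ∑ j : K, M * (φ (j • x) y + φ (j • x) 0) := by
        gcongr with j
        exact hj j
    _ = M * KQuadratic.controlFn K β φ x y := by
        simp only [KQuadratic.controlFn, ← mul_sum]
        ring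

end Algebra

section BetaNorm

variable {F : Type*} [NormedAddCommGroup F] [Module ℝ F] {β : ℝ}

theorem continuousConstSMul_of_norm_smul (hβ : ∀ (r : ℝ) (z : F), ‖r • z‖ = |r| ^ β * ‖z‖) :
    ContinuousConstSMul ℝ F :=
  ⟨fun r => AddMonoidHomClass.continuous_of_bound (DistribSMul.toAddMonoidHom F r)
    (|r| ^ β) fun z => (hβ r z).le⟩

theorem norm_smul_sum_le (hβ : ∀ (r : ℝ) (z : F), ‖r • z‖ = |r| ^ β * ‖z‖)
    {ι : Type*} (s : Finset ι) (v : ι → F) {r : ℝ} (hr : 0 ≤ r) :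
    ‖r • ∑ i ∈ s, v i‖ ≤ r ^ β * ∑ i ∈ s, ‖v i‖ := by
  rw [hβ, abs_of_nonneg hr]
  exact mul_le_mul_of_nonneg_left (norm_sum_le _ _) (by positivity)

theorem norm_inv_smul_sum_le_of_sum_le (hβ : ∀ (r : ℝ) (z : F), ‖r • z‖ = |r| ^ β * ‖z‖)
    {α ι : Type*} [Fintype ι] (σ : ι → α → α) {Φ : α → ℝ} {M L r : ℝ} (hM : 0 < M)
    (hΦ : ∀ a, ∑ i, Φ (σ i a) ≤ M ^ β * L * Φ a) (hr : 0 ≤ r)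
    {G : α → F} (hG : ∀ a, ‖G a‖ ≤ r * Φ a) (a : α) :
    ‖M⁻¹ • ∑ i, G (σ i a)‖ ≤ L * r * Φ a :=
  calc ‖M⁻¹ • ∑ i, G (σ i a)‖
      ≤ M⁻¹ ^ β * ∑ i, r * Φ (σ i a) :=
        (norm_smul_sum_le hβ _ _ (by positivity)).trans <|
          mul_le_mul_of_nonneg_left (sum_le_sum fun i _ => hG _) (by positivity)
    _ = (M ^ β)⁻¹ * r * ∑ i, Φ (σ i a) := by rw [Real.inv_rpow hM.le, ← mul_sum]; ring
    _ ≤ (M ^ β)⁻¹ * r * (M ^ β * L * Φ a) := by gcongr; exact hΦ a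
    _ = L * r * Φ a := by field_simp

variable {K : Type*} [CommGroup K] [Fintype K] [DistribMulAction K E] {L : ℝ}

theorem norm_defect_iterate_le (hβ : ∀ (r : ℝ) (z : F), ‖r • z‖ = |r| ^ β * ‖z‖) (hL0 : 0 ≤ L)
    {ψ : E → E → ℝ} (hψ : IsContractiveControl K β L ψ) {H : E → F}
    (hH : ∀ x y, ‖defect K H H H x y‖ ≤ ψ x y) (n : ℕ) (x y : E) :
    ‖defect K ((doublingAvg K)^[n] H) ((doublingAvg K)^[n] H) ((doublingAvg K)^[n] H) x y‖
      ≤ L ^ n * ψ x y := by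
  induction n generalizing x y with
  | zero => simpa using hH x y
  | succ n ih =>
    rw [Function.iterate_succ_apply', defect_doublingAvg, pow_succ']
    exact norm_inv_smul_sum_le_of_sum_le hβ (fun j (p : E × E) => (p.1 + j • p.1, p.2 + j • p.2))
      (Φ := fun p => ψ p.1 p.2) (by positivity) (fun p => hψ p.1 p.2) (pow_nonneg hL0 n)
      (G := fun p => defect K _ _ _ p.1 p.2) (fun p => ih p.1 p.2) (x, y)

theorem norm_iterate_succ_sub_le (hβ : ∀ (r : ℝ) (z : F), ‖r • z‖ = |r| ^ β * ‖z‖) (hL0 : 0 ≤ L)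
    {ψ : E → E → ℝ} (hψ : IsContractiveControl K β L ψ) {H : E → F}
    (hH : ∀ x y, ‖defect K H H H x y‖ ≤ ψ x y) (n : ℕ) (x : E) :
    ‖(doublingAvg K)^[n] (doublingAvg K H) x - (doublingAvg K)^[n] H x‖
      ≤ L ^ n * (2 ^ β)⁻¹ * ψ x x := by
  induction n generalizing x with
  | zero =>
    rw [Function.iterate_zero_apply, Function.iterate_zero_apply, doublingAvg_sub_self, pow_zero,
      one_mul, hβ, abs_of_pos (by norm_num), Real.inv_rpow zero_le_two]
    gcongr
    exact hH x x
  | succ n ih =>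
    rw [Function.iterate_succ_apply', Function.iterate_succ_apply', doublingAvg_sub,
      pow_succ', mul_assoc L]
    exact norm_inv_smul_sum_le_of_sum_le hβ (fun j z => z + j • z) (Φ := fun z => ψ z z)
      (by positivity) (fun z => hψ z z) (by positivity) (fun z => ih z) x

theorem exists_defect_eq_zero_of_norm_defect_le [CompleteSpace F]
    (hβ : ∀ (r : ℝ) (z : F), ‖r • z‖ = |r| ^ β * ‖z‖) (hL0 : 0 ≤ L) (hL1 : L < 1)
    {ψ : E → E → ℝ} (hψ : IsContractiveControl K β L ψ) {H : E → F}
    (hH : ∀ x y, ‖defect K H H H x y‖ ≤ ψ x y) :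
    ∃ q : E → F, (∀ x y, defect K q q q x y = 0) ∧
      ∀ x, ‖H x - q x‖ ≤ 1 / 2 ^ β * (1 / (1 - L)) * ψ x x := by
  have := continuousConstSMul_of_norm_smul hβ
  have hstep : ∀ x n, dist ((doublingAvg K)^[n] H x) ((doublingAvg K)^[n + 1] H x)
      ≤ (2 ^ β)⁻¹ * ψ x x * L ^ n := fun x n => by
    rw [dist_comm, dist_eq_norm]
    exact (norm_iterate_succ_sub_le hβ hL0 hψ hH n x).trans_eq (by ring)
  choose q hq using fun x =>
    cauchySeq_tendsto_of_complete (cauchySeq_of_le_geometric _ _ hL1 (hstep x))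
  refine ⟨q, fun x y => ?_, fun x => ?_⟩
  · refine tendsto_nhds_unique (tendsto_defect hq x y)
      (squeeze_zero_norm (norm_defect_iterate_le hβ hL0 hψ hH · x y) ?_)
    simpa using (tendsto_pow_atTop_nhds_zero_of_lt_one hL0 hL1).mul_const (ψ x y)
  · have := dist_le_of_le_geometric_of_tendsto₀ _ _ hL1 (hstep x) (hq x)
    rw [dist_eq_norm] at this
    exact this.trans_eq (by ring)

theorem one_le_card_div_rpow (hβ1 : β ≤ 1) :
    1 ≤ (Fintype.card K : ℝ) / (Fintype.card K : ℝ) ^ β := by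
  have hc : (1 : ℝ) ≤ Fintype.card K := Nat.one_le_cast.2 Fintype.card_pos
  rw [one_le_div (by positivity)]
  simpa using Real.rpow_le_rpow_of_exponent_le hc hβ1

theorem norm_defect_orbitApprox_le (hβ : ∀ (r : ℝ) (z : F), ‖r • z‖ = |r| ^ β * ‖z‖)
    (hβ1 : β ≤ 1) {φ : E → E → ℝ} {f g h : E → F} (hfgh : ∀ x y, ‖defect K f g h x y‖ ≤ φ x y)
    (x y : E) :
    ‖defect K (orbitApprox K f g h) (orbitApprox K f g h) (orbitApprox K f g h) x y‖
      ≤ controlFn K β φ x y := by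
  have havg : ∀ z, ‖(Fintype.card K : ℝ)⁻¹ • ∑ j : K, defect K f g h (j • x) z‖
      ≤ ((Fintype.card K : ℝ) ^ β)⁻¹ * ∑ j : K, φ (j • x) z := fun z => by
    refine (norm_smul_sum_le hβ _ _ (by positivity)).trans ?_
    rw [Real.inv_rpow (by positivity)]
    gcongr with j
    exact hfgh _ _
  have hφ0 : φ 0 y ≤ (Fintype.card K : ℝ) / (Fintype.card K : ℝ) ^ β * φ 0 y :=
    le_mul_of_one_le_left ((norm_nonneg _).trans (hfgh 0 y)) (one_le_card_div_rpow hβ1)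
  rw [defect_orbitApprox, controlFn, sum_add_distrib, mul_add]
  calc _ ≤ ‖(Fintype.card K : ℝ)⁻¹ • ∑ j : K, defect K f g h (j • x) y‖
          + ‖(Fintype.card K : ℝ)⁻¹ • ∑ j : K, defect K f g h (j • x) 0‖
          + ‖defect K f g h 0 y‖ :=
        (norm_sub_le _ _).trans (add_le_add_left (norm_sub_le _ _) _)
    _ ≤ _ := add_le_add (add_le_add (havg y) (havg 0)) (hfgh 0 y)
    _ ≤ _ := by linarith

end BetaNorm

theorem completeSpace_of_norm_cauchy {F : Type*} [NormedAddCommGroup F]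
    (h : ∀ u : ℕ → F, (∀ ε : ℝ, 0 < ε → ∃ N, ∀ m ≥ N, ∀ n ≥ N, ‖u m - u n‖ < ε) →
      ∃ l : F, ∀ ε : ℝ, 0 < ε → ∃ N, ∀ n ≥ N, ‖u n - l‖ < ε) :
    CompleteSpace F :=
  Metric.complete_of_cauchySeq_tendsto fun u hu => by
    simp only [Metric.cauchySeq_iff, dist_eq_norm] at hu
    obtain ⟨l, hl⟩ := h u hu
    exact ⟨l, Metric.tendsto_atTop.2 (by simpa only [dist_eq_norm] using hl)⟩

def addGroupNormOfHomogeneous {F : Type*} [AddCommGroup F] [Module ℝ F] {β : ℝ} (Nb : F → ℝ)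
    (hN0 : ∀ z, Nb z = 0 ↔ z = 0) (hNs : ∀ (r : ℝ) (z : F), Nb (r • z) = |r| ^ β * Nb z)
    (hNt : ∀ z w, Nb (z + w) ≤ Nb z + Nb w) : AddGroupNorm F where
  toFun := Nb
  map_zero' := (hN0 0).2 rfl
  add_le' := hNt
  neg' z := by simpa using hNs (-1) z
  eq_zero_of_map_eq_zero' z := (hN0 z).1

end KQuadratic

end

open KQuadratic in
theorem stmt_9_general
    {E : Type*} [AddCommGroup E]
    {F : Type*} [AddCommGroup F] [Module ℝ F]
    {β : ℝ} (hβ1 : β ≤ 1)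
    (Nb : F → ℝ)
    (hN0 : ∀ z : F, Nb z = 0 ↔ z = 0)
    (hNs : ∀ (r : ℝ) (z : F), Nb (r • z) = |r| ^ β * Nb z)
    (hNt : ∀ z w : F, Nb (z + w) ≤ Nb z + Nb w)
    (hcomp : ∀ u : ℕ → F,
      (∀ ε : ℝ, 0 < ε → ∃ N, ∀ m ≥ N, ∀ n ≥ N, Nb (u m - u n) < ε) →
      ∃ l : F, ∀ ε : ℝ, 0 < ε → ∃ N, ∀ n ≥ N, Nb (u n - l) < ε)
    {K : Type*} [CommGroup K] [Fintype K] [DistribMulAction K E]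
    (φ : E → E → ℝ)
    (L : ℝ) (hL0 : 0 ≤ L) (hL1 : L < 1)
    (hφcontr : ∀ x y : E,
      (∑ k : K, φ (x + k • x) (y + k • y)) ≤ (2 * (Fintype.card K : ℝ)) ^ β * L * φ x y)
    (f g h : E → F)
    (hfgh : ∀ x y : E,
      Nb ((Fintype.card K : ℝ)⁻¹ • (∑ k : K, f (x + k • y)) - g x - h y) ≤ φ x y)
    (ψ : E → E → ℝ)
    (hψ : ∀ x y : E, ψ x y =
      (Fintype.card K : ℝ) / (Fintype.card K : ℝ) ^ β * φ 0 y
        + ((Fintype.card K : ℝ) ^ β)⁻¹ * ∑ k : K, (φ (k • x) y + φ (k • x) 0)) :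
    ∃ q : E → F,
      (∀ x y : E, (Fintype.card K : ℝ)⁻¹ • (∑ k : K, q (x + k • y)) = q x + q y) ∧
      (∀ x : E, Nb (h x - q x - h 0) ≤ 1 / 2 ^ β * (1 / (1 - L)) * ψ x x + φ 0 x) := by
  let _ : NormedAddCommGroup F := (addGroupNormOfHomogeneous Nb hN0 hNs hNt).toNormedAddCommGroup
  have hβ : ∀ (r : ℝ) (z : F), ‖r • z‖ = |r| ^ β * ‖z‖ := hNs
  have := completeSpace_of_norm_cauchy hcomp
  obtain rfl : ψ = controlFn K β φ := funext fun x => funext (hψ x)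
  obtain ⟨q, hq, hHq⟩ := exists_defect_eq_zero_of_norm_defect_le hβ hL0 hL1
    (IsContractiveControl.controlFn hφcontr) (norm_defect_orbitApprox_le hβ hβ1 hfgh)
  refine ⟨q, fun x y => by simpa only [defect, sub_sub, sub_eq_zero] using hq x y, fun x => ?_⟩
  calc ‖h x - q x - h 0‖ = ‖(orbitApprox K f g h x - q x) - defect K f g h 0 x‖ := by
        rw [orbitApprox_eq]; congr 1; abel
    _ ≤ _ := (norm_sub_le _ _).trans (add_le_add (hHq x) (hfgh 0 x))

theorem stmt_9
    {E : Type*} [AddCommGroup E] [Module ℝ E]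
    {F : Type*} [AddCommGroup F] [Module ℝ F]
    {β : ℝ} (hβ0 : 0 < β) (hβ1 : β ≤ 1)
    (Nb : F → ℝ)
    (hNnn : ∀ z : F, 0 ≤ Nb z)
    (hN0 : ∀ z : F, Nb z = 0 ↔ z = 0)
    (hNs : ∀ (r : ℝ) (z : F), Nb (r • z) = |r| ^ β * Nb z)
    (hNt : ∀ z w : F, Nb (z + w) ≤ Nb z + Nb w)
    (hcomp : ∀ u : ℕ → F,
      (∀ ε : ℝ, 0 < ε → ∃ N, ∀ m ≥ N, ∀ n ≥ N, Nb (u m - u n) < ε) →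
      ∃ l : F, ∀ ε : ℝ, 0 < ε → ∃ N, ∀ n ≥ N, Nb (u n - l) < ε)
    {K : Type*} [CommGroup K] [Fintype K] [DistribMulAction K E]
    (φ : E → E → ℝ) (hφ : ∀ x y, 0 ≤ φ x y)
    (L : ℝ) (hL0 : 0 ≤ L) (hL1 : L < 1)
    (hφcontr : ∀ x y : E,
      (∑ k : K, φ (x + k • x) (y + k • y)) ≤ (2 * (Fintype.card K : ℝ)) ^ β * L * φ x y)
    (f g h : E → F)
    (hfgh : ∀ x y : E,
      Nb ((Fintype.card K : ℝ)⁻¹ • (∑ k : K, f (x + k • y)) - g x - h y) ≤ φ x y)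
    (ψ : E → E → ℝ)
    (hψ : ∀ x y : E, ψ x y =
      (Fintype.card K : ℝ) / (Fintype.card K : ℝ) ^ β * φ 0 y
        + ((Fintype.card K : ℝ) ^ β)⁻¹ * ∑ k : K, (φ (k • x) y + φ (k • x) 0)) :
    ∃ q : E → F,
      (∀ x y : E, (Fintype.card K : ℝ)⁻¹ • (∑ k : K, q (x + k • y)) = q x + q y) ∧
      (∀ x : E, Nb (h x - q x - h 0) ≤ 1 / 2 ^ β * (1 / (1 - L)) * ψ x x + φ 0 x) :=
  stmt_9_general hβ1 Nb hN0 hNs hNt hcomp φ L hL0 hL1 hφcontr f g h hfgh ψ hψ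
end

section
/- Let κ : E → F satisfy ‖(1/|K|)·∑_{k∈K} κ(x + k·y) − κ(x) − κ(y)‖_β ≤ ψ(x,y) for all x, y ∈ E, where ψ satisfies ∑_{k∈K} ψ(x+k·x, y+k·y) ≤ (2|K|)^β·L·ψ(x,y). Define (Jκ)(x) = (1/(2|K|))·∑_{k∈K} κ(x + k·x). Then for every n ≥ 1, ‖(1/|K|)·∑_{k∈K} (J^n κ)(x + k·y) − (J^n κ)(x) − (J^n κ)(y)‖_β ≤ L^n·ψ(x,y) for all x, y ∈ E. -/
theorem stmt_10
    {E : Type*} [AddCommGroup E] [Module ℝ E]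
    {F : Type*} [AddCommGroup F] [Module ℝ F]
    {β : ℝ} (hβ0 : 0 < β) (hβ1 : β ≤ 1)
    (Nb : F → ℝ)
    (hNnn : ∀ z : F, 0 ≤ Nb z)
    (hN0 : ∀ z : F, Nb z = 0 ↔ z = 0)
    (hNs : ∀ (r : ℝ) (z : F), Nb (r • z) = |r| ^ β * Nb z)
    (hNt : ∀ z w : F, Nb (z + w) ≤ Nb z + Nb w)
    {K : Type*} [CommGroup K] [Fintype K] [DistribMulAction K E]
    (ψ : E → E → ℝ) (hψnn : ∀ x y, 0 ≤ ψ x y)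
    (L : ℝ) (hL0 : 0 ≤ L) (hL1 : L < 1)
    (hψcontr : ∀ x y : E,
      (∑ k : K, ψ (x + k • x) (y + k • y)) ≤ (2 * (Fintype.card K : ℝ)) ^ β * L * ψ x y)
    (κ : E → F)
    (hκ : ∀ x y : E,
      Nb ((Fintype.card K : ℝ)⁻¹ • (∑ k : K, κ (x + k • y)) - κ x - κ y) ≤ ψ x y)
    (J : (E → F) → (E → F))
    (hJ : ∀ (l : E → F) (x : E),
      J l x = (2 * (Fintype.card K : ℝ))⁻¹ • (∑ k : K, l (x + k • x))) :
    ∀ n : ℕ, 1 ≤ n → ∀ x y : E,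
      Nb ((Fintype.card K : ℝ)⁻¹ • (∑ k : K, (J^[n] κ) (x + k • y))
          - (J^[n] κ) x - (J^[n] κ) y) ≤ L ^ n * ψ x y := by
  have hc : (0:ℝ) < (Fintype.card K : ℝ) := by exact_mod_cast Fintype.card_pos
  set c : ℝ := (Fintype.card K : ℝ) with hcdef
  have h2c : (0:ℝ) < 2 * c := by linarith
  have hN0' : Nb 0 = 0 := (hN0 0).mpr rfl
  have hNsum : ∀ (f : K → F), Nb (∑ i : K, f i) ≤ ∑ i : K, Nb (f i) := by
    intro f
    classical
    induction (Finset.univ : Finset K) using Finset.cons_induction with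
    | empty => simp [hN0']
    | cons a s ha ih =>
      rw [Finset.sum_cons, Finset.sum_cons]
      exact (hNt _ _).trans (by linarith)
  have main : ∀ n : ℕ, ∀ x y : E,
      Nb (c⁻¹ • (∑ k : K, (J^[n] κ) (x + k • y)) - (J^[n] κ) x - (J^[n] κ) y)
        ≤ L ^ n * ψ x y := by
    intro n
    induction n with
    | zero => simpa using hκ
    | succ n ih =>
      intro x y
      set l : E → F := J^[n] κ with hl
      have hJn : J^[n+1] κ = J l := Function.iterate_succ_apply' J n κ
      rw [hJn]
      have harg : ∀ j k : K, x + k • y + j • (x + k • y)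
          = (x + j • x) + k • (y + j • y) := by
        intro j k
        simp only [smul_add, smul_smul]
        rw [mul_comm j k]
        abel
      have hA : c⁻¹ • (∑ k : K, J l (x + k • y))
          = (2*c)⁻¹ • ∑ j : K, c⁻¹ • (∑ k : K, l ((x + j • x) + k • (y + j • y))) := by
        simp only [hJ, Finset.smul_sum]
        rw [Finset.sum_comm]
        congr 1
        ext j
        congr 1
        ext k
        rw [smul_comm, harg j k]
      have key : c⁻¹ • (∑ k : K, J l (x + k • y)) - J l x - J l y
          = (2*c)⁻¹ • ∑ j : K,
              (c⁻¹ • (∑ k : K, l ((x + j • x) + k • (y + j • y)))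
                - l (x + j • x) - l (y + j • y)) := by
        rw [hA, hJ, hJ]
        simp only [Finset.sum_sub_distrib, smul_sub]
      rw [key, hNs]
      have habs : |(2*c)⁻¹| = (2*c)⁻¹ := abs_of_pos (by positivity)
      rw [habs]
      have hrp : ((2*c)⁻¹) ^ β = ((2*c) ^ β)⁻¹ := Real.inv_rpow h2c.le β
      have hp : (0:ℝ) < (2*c) ^ β := Real.rpow_pos_of_pos h2c β
      have hbound : Nb (∑ j : K,
              (c⁻¹ • (∑ k : K, l ((x + j • x) + k • (y + j • y)))
                - l (x + j • x) - l (y + j • y)))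
          ≤ L ^ n * ((2*c) ^ β * L * ψ x y) := by
        refine (hNsum _).trans ?_
        have h1 : ∑ j : K, Nb (c⁻¹ • (∑ k : K, l ((x + j • x) + k • (y + j • y)))
                - l (x + j • x) - l (y + j • y))
            ≤ ∑ j : K, L ^ n * ψ (x + j • x) (y + j • y) :=
          Finset.sum_le_sum fun j _ => ih (x + j • x) (y + j • y)
        refine h1.trans ?_
        rw [← Finset.mul_sum]
        exact mul_le_mul_of_nonneg_left (hψcontr x y) (pow_nonneg hL0 n)
      calc ((2*c)⁻¹) ^ β * Nb _ ≤ ((2*c)⁻¹) ^ β * (L ^ n * ((2*c) ^ β * L * ψ x y)) := by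
              refine mul_le_mul_of_nonneg_left hbound ?_
              rw [hrp]; positivity
        _ = L ^ (n+1) * ψ x y := by
              rw [hrp]
              field_simp
              ring
  intro n _ x y
  exact main n x y
end

section
/- (Pexider Cauchy stability with general control) If f, g, h : E → F satisfy ‖f(x+y) − g(x) − h(y)‖_β ≤ φ(x,y) for all x, y ∈ E, where φ(2x, 2y) ≤ 2^β·L·φ(x,y) for some L < 1, then there exists a unique additive a : E → F such that ‖f(x) − a(x) − g(0) − h(0)‖_β ≤ (2/2^β)·(1/(1−L))·χ(x,x) + (1/2^β)·(1/(1−L))·ψ(x,x), ‖g(x) − a(x) − g(0)‖_β ≤ φ(x,0) + (2/2^β)·(1/(1−L))·χ(x,x) + (1/2^β)·(1/(1−L))·ψ(x,x), and ‖h(x) − a(x) − h(0)‖_β ≤ (1/2^β)·(1/(1−L))·ψ(x,x) + φ(0,x), where χ(x,y) = 2φ(0,y) + 2φ(x,y) + 2φ(x,0) and ψ(x,y) = φ(0,y) + φ(x,y) + φ(x,0). -/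
/-!
Comparing the Pexider inequality at `(x, y)`, `(x, 0)` and `(0, y)` shows that
`u x = f x - g 0 - h 0` has Cauchy difference `u (x + y) - u x - u y` bounded by `ψ x y`. The β-norm is a group norm, so `F` is a complete
metric space, and Hyers' sequence `2⁻ⁿ u (2ⁿ x)` has consecutive distances at most
`2^{-β} Lⁿ ψ(x, x)`: it converges to a map `a` at distance `ψ(x, x) / (2^β (1 - L))` from `u`,
and the Cauchy differences `2⁻ⁿ (u (2ⁿ x + 2ⁿ y) - u (2ⁿ x) - u (2ⁿ y))`, of size `Lⁿ ψ(x, y)`,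
tend to zero, so `a` is additive. The bounds for `g` and `h` follow from those for `f` by
specialising the Pexider inequality at `y = 0` and `x = 0`. An additive map `b` satisfies
`b x = 2⁻ⁿ b (2ⁿ x)`, so two additive maps within the control of `u` are at distance
`O(Lⁿ)` for every `n`, hence equal.
-/

open Filter Topology

def AddGroupNorm.ofRpowHomogeneous {F : Type*} [AddCommGroup F] [Module ℝ F] {β : ℝ}
    (N : F → ℝ) (hN0 : ∀ z, N z = 0 ↔ z = 0) (hNs : ∀ (r : ℝ) (z : F), N (r • z) = |r| ^ β * N z)
    (hNt : ∀ z w, N (z + w) ≤ N z + N w) : AddGroupNorm F where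
  toFun := N
  map_zero' := (hN0 0).2 rfl
  add_le' := hNt
  neg' z := by simpa using hNs (-1) z
  eq_zero_of_map_eq_zero' z := (hN0 z).1

theorem completeSpace_of_norm_cauchy_tendsto {G : Type*} [SeminormedAddCommGroup G]
    (h : ∀ u : ℕ → G, (∀ ε > 0, ∃ N, ∀ m ≥ N, ∀ n ≥ N, ‖u m - u n‖ < ε) →
      ∃ l, ∀ ε > 0, ∃ N, ∀ n ≥ N, ‖u n - l‖ < ε) :
    CompleteSpace G :=
  Metric.complete_of_cauchySeq_tendsto fun u hu =>
    (h u (by simpa only [dist_eq_norm] using Metric.cauchySeq_iff.1 hu)).imp fun _ hl =>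
      Metric.tendsto_atTop.2 (by simpa only [dist_eq_norm] using hl)

section Pexider

variable {E G : Type*} [AddZeroClass E] [SeminormedAddCommGroup G]
  {f g h : E → G} {φ : E → E → ℝ}

theorem norm_cauchyDiff_le_of_pexider (hfgh : ∀ x y, ‖f (x + y) - g x - h y‖ ≤ φ x y)
    (x y : E) :
    ‖(f (x + y) - g 0 - h 0) - (f x - g 0 - h 0) - (f y - g 0 - h 0)‖
      ≤ φ 0 y + φ x y + φ x 0 := by
  have hx := hfgh x 0
  have hy := hfgh 0 y
  rw [add_zero] at hx
  rw [zero_add] at hy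
  calc ‖(f (x + y) - g 0 - h 0) - (f x - g 0 - h 0) - (f y - g 0 - h 0)‖
      = ‖(f (x + y) - g x - h y) - (f x - g x - h 0) - (f y - g 0 - h y)‖ := by
        congr 1; abel
    _ ≤ ‖f (x + y) - g x - h y‖ + ‖f x - g x - h 0‖ + ‖f y - g 0 - h y‖ :=
      (norm_sub_le _ _).trans (add_le_add_left (norm_sub_le _ _) _)
    _ ≤ φ 0 y + φ x y + φ x 0 := by linarith [hfgh x y]

theorem norm_pexider_sub_le (hfgh : ∀ x y, ‖f (x + y) - g x - h y‖ ≤ φ x y) (a : E → G)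
    (x : E) :
    ‖g x - a x - g 0‖ ≤ φ x 0 + ‖f x - g 0 - h 0 - a x‖ ∧
      ‖h x - a x - h 0‖ ≤ ‖f x - g 0 - h 0 - a x‖ + φ 0 x := by
  have hx := hfgh x 0
  have hy := hfgh 0 x
  rw [add_zero] at hx
  rw [zero_add] at hy
  constructor
  · calc ‖g x - a x - g 0‖ = ‖(f x - g 0 - h 0 - a x) - (f x - g x - h 0)‖ := by congr 1; abel
      _ ≤ _ := norm_sub_le _ _
      _ ≤ _ := by linarith
  · calc ‖h x - a x - h 0‖ = ‖(f x - g 0 - h 0 - a x) - (f x - g 0 - h x)‖ := by congr 1; abel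
      _ ≤ _ := norm_sub_le _ _
      _ ≤ _ := by linarith

end Pexider

theorem pexiderControl_smul_le {R E : Type*} [Zero E] [SMulZeroClass R E] {φ : E → E → ℝ}
    {c : R} {K : ℝ} (hφ : ∀ x y, φ (c • x) (c • y) ≤ K * φ x y) (x y : E) :
    φ 0 (c • y) + φ (c • x) (c • y) + φ (c • x) 0 ≤ K * (φ 0 y + φ x y + φ x 0) := by
  have h0y := hφ 0 y
  have hx0 := hφ x 0
  rw [smul_zero] at h0y hx0
  linarith [hφ x y]

/-- Hyers' sequence `2⁻ⁿ u (2ⁿ x)` is `hyersOp^[n] u`. -/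
noncomputable def hyersOp {E G : Type*} [SMul ℝ E] [SMul ℝ G] (u : E → G) (x : E) : G :=
  (2 : ℝ)⁻¹ • u ((2 : ℝ) • x)

theorem hyersOp_iterate_succ_apply {E G : Type*} [SMul ℝ E] [SMul ℝ G] (u : E → G) (n : ℕ)
    (x : E) : hyersOp^[n + 1] u x = (2 : ℝ)⁻¹ • hyersOp^[n] u ((2 : ℝ) • x) := by
  rw [Function.iterate_succ_apply']
  rfl

section BetaHomogeneous

variable {X E G : Type*} [AddCommGroup E] [Module ℝ E] {β L : ℝ}

section Seminormed

variable [SeminormedAddCommGroup G] [Module ℝ G]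
  (hsmul : ∀ (r : ℝ) (z : G), ‖r • z‖ = |r| ^ β * ‖z‖)
include hsmul

theorem norm_inv_two_smul (z : G) : ‖(2 : ℝ)⁻¹ • z‖ = (2 ^ β)⁻¹ * ‖z‖ := by
  rw [hsmul, abs_of_pos (by norm_num), Real.inv_rpow zero_le_two]

theorem norm_le_pow_mul_of_eq_inv_two_smul (hL0 : 0 ≤ L) {σ : X → X} {c : X → ℝ}
    (hc : ∀ x, c (σ x) ≤ 2 ^ β * L * c x) {w : ℕ → X → G}
    (hw : ∀ n x, w (n + 1) x = (2 : ℝ)⁻¹ • w n (σ x)) (h0 : ∀ x, ‖w 0 x‖ ≤ c x) (n : ℕ) (x : X) :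
    ‖w n x‖ ≤ L ^ n * c x := by
  induction n generalizing x with
  | zero => simpa using h0 x
  | succ n ih =>
    calc ‖w (n + 1) x‖ = (2 ^ β)⁻¹ * ‖w n (σ x)‖ := by rw [hw, norm_inv_two_smul hsmul]
      _ ≤ (2 ^ β)⁻¹ * (L ^ n * (2 ^ β * L * c x)) := by
        gcongr
        exact (ih _).trans (mul_le_mul_of_nonneg_left (hc x) (pow_nonneg hL0 n))
      _ = L ^ (n + 1) * c x := by field_simp; ring

variable (hL0 : 0 ≤ L) {u : E → G} {ψ : E → E → ℝ}
  (hψ : ∀ x y, ψ ((2 : ℝ) • x) ((2 : ℝ) • y) ≤ 2 ^ β * L * ψ x y)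
  (hu : ∀ x y, ‖u (x + y) - u x - u y‖ ≤ ψ x y)
include hL0 hψ hu

theorem dist_hyersOp_iterate_succ_le (n : ℕ) (x : E) :
    dist (hyersOp^[n] u x) (hyersOp^[n + 1] u x) ≤ ψ x x / 2 ^ β * L ^ n := by
  rw [dist_comm, dist_eq_norm, mul_comm _ (L ^ n)]
  refine norm_le_pow_mul_of_eq_inv_two_smul hsmul hL0 (σ := ((2 : ℝ) • ·))
    (c := fun x => ψ x x / 2 ^ β) (w := fun n x => hyersOp^[n + 1] u x - hyersOp^[n] u x)
    (fun x => ?_) (fun n x => by simp only [hyersOp_iterate_succ_apply, smul_sub]) (fun x => ?_) n x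
  · rw [mul_div_assoc']
    gcongr
    exact hψ x x
  · calc ‖hyersOp u x - u x‖ = ‖(2 : ℝ)⁻¹ • (u (x + x) - u x - u x)‖ := by
          rw [hyersOp, ← two_smul ℝ x]; congr 1; module
      _ ≤ ψ x x / 2 ^ β := by
          rw [norm_inv_two_smul hsmul, inv_mul_eq_div]
          gcongr
          exact hu x x

theorem norm_cauchyDiff_hyersOp_iterate_le (n : ℕ) (x y : E) :
    ‖hyersOp^[n] u (x + y) - hyersOp^[n] u x - hyersOp^[n] u y‖ ≤ L ^ n * ψ x y :=
  norm_le_pow_mul_of_eq_inv_two_smul hsmul hL0 (σ := fun p : E × E => (2 : ℝ) • p)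
    (c := fun p => ψ p.1 p.2)
    (w := fun n p => hyersOp^[n] u (p.1 + p.2) - hyersOp^[n] u p.1 - hyersOp^[n] u p.2)
    (fun p => hψ p.1 p.2)
    (fun n p => by simp only [hyersOp_iterate_succ_apply, Prod.smul_fst, Prod.smul_snd, smul_add,
      smul_sub])
    (fun p => hu p.1 p.2) n (x, y)

end Seminormed

variable [NormedAddCommGroup G] [Module ℝ G]
  (hsmul : ∀ (r : ℝ) (z : G), ‖r • z‖ = |r| ^ β * ‖z‖) (hL0 : 0 ≤ L) (hL1 : L < 1)
include hsmul hL0 hL1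

theorem exists_addMonoidHom_norm_sub_le [CompleteSpace G] {u : E → G} {ψ : E → E → ℝ}
    (hψ : ∀ x y, ψ ((2 : ℝ) • x) ((2 : ℝ) • y) ≤ 2 ^ β * L * ψ x y)
    (hu : ∀ x y, ‖u (x + y) - u x - u y‖ ≤ ψ x y) :
    ∃ a : E →+ G, ∀ x, ‖u x - a x‖ ≤ ψ x x / 2 ^ β / (1 - L) := by
  have hstep := dist_hyersOp_iterate_succ_le hsmul hL0 hψ hu
  choose a ha using fun x => cauchySeq_tendsto_of_complete
    (cauchySeq_of_le_geometric _ _ hL1 (hstep · x))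
  have hadd : ∀ x y, a (x + y) = a x + a y := by
    intro x y
    have hzero := squeeze_zero_norm (norm_cauchyDiff_hyersOp_iterate_le hsmul hL0 hψ hu · x y)
      (by simpa using (tendsto_pow_atTop_nhds_zero_of_lt_one hL0 hL1).mul_const (ψ x y))
    have := tendsto_nhds_unique (((ha (x + y)).sub (ha x)).sub (ha y)) hzero
    rwa [sub_sub, sub_eq_zero] at this
  refine ⟨AddMonoidHom.mk' a hadd, fun x => ?_⟩
  have := dist_le_of_le_geometric_of_tendsto₀ _ _ hL1 (hstep · x) (ha x)
  rwa [dist_eq_norm] at this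

theorem AddMonoidHom.eq_of_norm_sub_le {C : E → ℝ}
    (hC : ∀ x, C ((2 : ℝ) • x) ≤ 2 ^ β * L * C x) {u : E → G} {a b : E →+ G}
    (ha : ∀ x, ‖u x - a x‖ ≤ C x) (hb : ∀ x, ‖u x - b x‖ ≤ C x) : a = b := by
  ext x
  have hhalf : ∀ y, a y - b y = (2 : ℝ)⁻¹ • (a ((2 : ℝ) • y) - b ((2 : ℝ) • y)) := by
    intro y; rw [two_smul, map_add, map_add]; module
  have hab : ∀ y, ‖a y - b y‖ ≤ 2 * C y := fun y => by
    calc ‖a y - b y‖ = ‖(u y - b y) - (u y - a y)‖ := by congr 1; abel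
      _ ≤ ‖u y - b y‖ + ‖u y - a y‖ := norm_sub_le _ _
      _ ≤ 2 * C y := by linarith [ha y, hb y]
  have hbound : ∀ n, ‖a x - b x‖ ≤ L ^ n * (2 * C x) := fun n =>
    norm_le_pow_mul_of_eq_inv_two_smul hsmul hL0 (fun y => by linarith [hC y])
      (w := fun _ y => a y - b y) (fun _ y => hhalf y) hab n x
  have hle : ‖a x - b x‖ ≤ 0 :=
    ge_of_tendsto'
      (by simpa using (tendsto_pow_atTop_nhds_zero_of_lt_one hL0 hL1).mul_const (2 * C x)) hbound
  exact sub_eq_zero.1 (norm_le_zero_iff.1 hle)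

end BetaHomogeneous

theorem stmt_18_general
    {E : Type*} [AddCommGroup E] [Module ℝ E]
    {F : Type*} [AddCommGroup F] [Module ℝ F]
    {β : ℝ}
    (Nb : F → ℝ)
    (hN0 : ∀ z : F, Nb z = 0 ↔ z = 0)
    (hNs : ∀ (r : ℝ) (z : F), Nb (r • z) = |r| ^ β * Nb z)
    (hNt : ∀ z w : F, Nb (z + w) ≤ Nb z + Nb w)
    (hcomp : ∀ u : ℕ → F,
      (∀ ε : ℝ, 0 < ε → ∃ N, ∀ m ≥ N, ∀ n ≥ N, Nb (u m - u n) < ε) →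
      ∃ l : F, ∀ ε : ℝ, 0 < ε → ∃ N, ∀ n ≥ N, Nb (u n - l) < ε)
    (φ : E → E → ℝ)
    (L : ℝ) (hL0 : 0 ≤ L) (hL1 : L < 1)
    (hφcontr : ∀ x y : E, φ ((2 : ℝ) • x) ((2 : ℝ) • y) ≤ (2 : ℝ) ^ β * L * φ x y)
    (f g h : E → F)
    (hfgh : ∀ x y : E, Nb (f (x + y) - g x - h y) ≤ φ x y)
    (χ ψ : E → E → ℝ)
    (hχ : ∀ x y : E, χ x y = 2 * φ 0 y + 2 * φ x y + 2 * φ x 0)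
    (hψ : ∀ x y : E, ψ x y = φ 0 y + φ x y + φ x 0) :
    ∃! a : E → F,
      (∀ x y : E, a (x + y) = a x + a y) ∧
      (∀ x : E, Nb (f x - a x - g 0 - h 0)
        ≤ 2 / 2 ^ β * (1 / (1 - L)) * χ x x + 1 / 2 ^ β * (1 / (1 - L)) * ψ x x) ∧
      (∀ x : E, Nb (g x - a x - g 0)
        ≤ φ x 0 + 2 / 2 ^ β * (1 / (1 - L)) * χ x x + 1 / 2 ^ β * (1 / (1 - L)) * ψ x x) ∧
      (∀ x : E, Nb (h x - a x - h 0)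
        ≤ 1 / 2 ^ β * (1 / (1 - L)) * ψ x x + φ 0 x) := by
  let _ : NormedAddCommGroup F :=
    (AddGroupNorm.ofRpowHomogeneous Nb hN0 hNs hNt).toNormedAddCommGroup
  have : CompleteSpace F := completeSpace_of_norm_cauchy_tendsto hcomp
  have hsub : ∀ (b : E → F) x, f x - b x - g 0 - h 0 = f x - g 0 - h 0 - b x := fun b x => by abel
  simp only [show ∀ z : F, Nb z = ‖z‖ from fun _ => rfl, hsub] at hfgh ⊢
  have hψ2 : ∀ x y, ψ ((2 : ℝ) • x) ((2 : ℝ) • y) ≤ 2 ^ β * L * ψ x y := fun x y => by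
    simpa only [hψ] using pexiderControl_smul_le hφcontr x y
  obtain ⟨a, ha⟩ := exists_addMonoidHom_norm_sub_le hNs hL0 hL1 hψ2 (u := fun x => f x - g 0 - h 0)
    fun x y => (norm_cauchyDiff_le_of_pexider hfgh x y).trans_eq (hψ x y).symm
  have hB2 : ∀ x, ψ ((2 : ℝ) • x) ((2 : ℝ) • x) / 2 ^ β / (1 - L)
      ≤ 2 ^ β * L * (ψ x x / 2 ^ β / (1 - L)) := fun x => by
    rw [mul_div_assoc', mul_div_assoc']
    gcongr
    exact hψ2 x x
  have hB : ∀ x, 1 / 2 ^ β * (1 / (1 - L)) * ψ x x = ψ x x / 2 ^ β / (1 - L) := fun x => by ring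
  have hK : ∀ x, 2 / 2 ^ β * (1 / (1 - L)) * χ x x + 1 / 2 ^ β * (1 / (1 - L)) * ψ x x
      = 5 * (ψ x x / 2 ^ β / (1 - L)) := fun x => by rw [hχ, hψ]; ring
  have hf5 : ∀ x, ‖f x - g 0 - h 0 - a x‖ ≤ 5 * (ψ x x / 2 ^ β / (1 - L)) := fun x => by
    linarith [ha x, (norm_nonneg _).trans (ha x)]
  refine ⟨a, ⟨map_add a, fun x => (hf5 x).trans_eq (hK x).symm, fun x => ?_, fun x => ?_⟩, ?_⟩
  · linarith [(norm_pexider_sub_le hfgh a x).1, hf5 x, hK x]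
  · linarith [(norm_pexider_sub_le hfgh a x).2, ha x, hB x]
  · rintro a' ⟨ha'add, ha'f, -, -⟩
    refine congrArg DFunLike.coe (AddMonoidHom.eq_of_norm_sub_le hNs hL0 hL1
      (C := fun x => 5 * (ψ x x / 2 ^ β / (1 - L))) (fun x => by linarith [hB2 x])
      (u := fun x => f x - g 0 - h 0) (a := AddMonoidHom.mk' a' ha'add) (fun x => ?_) hf5)
    simpa only [AddMonoidHom.mk'_apply, hK] using ha'f x

theorem stmt_18
    {E : Type*} [AddCommGroup E] [Module ℝ E]
    {F : Type*} [AddCommGroup F] [Module ℝ F]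
    {β : ℝ} (hβ0 : 0 < β) (hβ1 : β ≤ 1)
    (Nb : F → ℝ)
    (hNnn : ∀ z : F, 0 ≤ Nb z)
    (hN0 : ∀ z : F, Nb z = 0 ↔ z = 0)
    (hNs : ∀ (r : ℝ) (z : F), Nb (r • z) = |r| ^ β * Nb z)
    (hNt : ∀ z w : F, Nb (z + w) ≤ Nb z + Nb w)
    (hcomp : ∀ u : ℕ → F,
      (∀ ε : ℝ, 0 < ε → ∃ N, ∀ m ≥ N, ∀ n ≥ N, Nb (u m - u n) < ε) →
      ∃ l : F, ∀ ε : ℝ, 0 < ε → ∃ N, ∀ n ≥ N, Nb (u n - l) < ε)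
    (φ : E → E → ℝ) (hφnn : ∀ x y, 0 ≤ φ x y)
    (L : ℝ) (hL0 : 0 ≤ L) (hL1 : L < 1)
    (hφcontr : ∀ x y : E, φ ((2 : ℝ) • x) ((2 : ℝ) • y) ≤ (2 : ℝ) ^ β * L * φ x y)
    (f g h : E → F)
    (hfgh : ∀ x y : E, Nb (f (x + y) - g x - h y) ≤ φ x y)
    (χ ψ : E → E → ℝ)
    (hχ : ∀ x y : E, χ x y = 2 * φ 0 y + 2 * φ x y + 2 * φ x 0)
    (hψ : ∀ x y : E, ψ x y = φ 0 y + φ x y + φ x 0) :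
    ∃! a : E → F,
      (∀ x y : E, a (x + y) = a x + a y) ∧
      (∀ x : E, Nb (f x - a x - g 0 - h 0)
        ≤ 2 / 2 ^ β * (1 / (1 - L)) * χ x x + 1 / 2 ^ β * (1 / (1 - L)) * ψ x x) ∧
      (∀ x : E, Nb (g x - a x - g 0)
        ≤ φ x 0 + 2 / 2 ^ β * (1 / (1 - L)) * χ x x + 1 / 2 ^ β * (1 / (1 - L)) * ψ x x) ∧
      (∀ x : E, Nb (h x - a x - h 0)
        ≤ 1 / 2 ^ β * (1 / (1 - L)) * ψ x x + φ 0 x) :=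
  stmt_18_general Nb hN0 hNs hNt hcomp φ L hL0 hL1 hφcontr f g h hfgh χ ψ hχ hψ
end

section
/- Define J^n by iterating (Jh)(x) = (1/(2|K|))·∑_{k∈K} h(x + k·x). Then (J^n h)(x) = (1/(2|K|)^n)·∑_{k_1,…,k_n ∈ K} h(x + ∑ over nonempty increasing index subsets {i_1 < … < i_p} ⊆ {1,…,n} of (k_{i_1}⋯k_{i_p})·x) for every n ≥ 1 and every x ∈ E. -/
open Finset

private lemma powerset_map' {α β : Type*} (f : α ↪ β) (s : Finset α) :
    (s.map f).powerset = s.powerset.map ⟨Finset.map f, Finset.map_injective f⟩ := by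
  ext t
  simp only [mem_powerset, mem_map, Function.Embedding.coeFn_mk, Finset.subset_map_iff]
  constructor
  · rintro ⟨u, hu, rfl⟩; exact ⟨u, hu, rfl⟩
  · rintro ⟨u, hu, rfl⟩; exact ⟨u, hu, rfl⟩

private lemma key_cons {E : Type*} [AddCommGroup E] {K : Type*} [CommGroup K]
    [DistribMulAction K E] {n : ℕ} (a : K) (k : Fin n → K) (x : E) :
    ∑ S ∈ (univ : Finset (Fin (n+1))).powerset, (∏ i ∈ S, Fin.cons a k i) • x
      = ∑ S ∈ (univ : Finset (Fin n)).powerset, (∏ i ∈ S, k i) • (x + a • x) := by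
  have h0 : (0 : Fin (n+1)) ∉ univ.map ⟨Fin.succ, Fin.succ_injective _⟩ := by simp
  rw [Fin.univ_succ, Finset.cons_eq_insert, Finset.sum_powerset_insert h0]
  rw [powerset_map', Finset.sum_map, Finset.sum_map]
  simp only [Function.Embedding.coeFn_mk, Finset.prod_map, Fin.cons_succ]
  rw [← Finset.sum_add_distrib]
  refine Finset.sum_congr rfl fun S hS => ?_
  have h0S : (0 : Fin (n+1)) ∉ S.map ⟨Fin.succ, Fin.succ_injective _⟩ := by
    simp [Fin.succ_ne_zero]
  rw [Finset.prod_insert h0S, Finset.prod_map]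
  simp only [Function.Embedding.coeFn_mk, Fin.cons_succ, Fin.cons_zero]
  rw [smul_add, smul_smul, mul_comm]

private lemma erase_to_full {E : Type*} [AddCommGroup E] {K : Type*} [CommGroup K]
    [DistribMulAction K E] {n : ℕ} (k : Fin n → K) (x : E) :
    x + ∑ S ∈ (univ : Finset (Fin n)).powerset.erase ∅, (∏ i ∈ S, k i) • x
      = ∑ S ∈ (univ : Finset (Fin n)).powerset, (∏ i ∈ S, k i) • x := by
  rw [← Finset.add_sum_erase _ _ (Finset.empty_mem_powerset _)]
  simp

theorem stmt_19
    {E : Type*} [AddCommGroup E]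
    {F : Type*} [AddCommGroup F] [Module ℝ F]
    {K : Type*} [CommGroup K] [Fintype K] [DistribMulAction K E]
    (h : E → F)
    (J : (E → F) → (E → F))
    (hJ : ∀ (l : E → F) (x : E),
      J l x = (2 * (Fintype.card K : ℝ))⁻¹ • (∑ k : K, l (x + k • x))) :
    ∀ n : ℕ, 1 ≤ n → ∀ x : E,
      (J^[n] h) x = ((2 * (Fintype.card K : ℝ)) ^ n)⁻¹ •
        ∑ k : Fin n → K,
          h (x + ∑ S ∈ (Finset.univ : Finset (Fin n)).powerset.erase ∅,
            (∏ i ∈ S, k i) • x) := by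
  have main : ∀ n : ℕ, ∀ x : E,
      (J^[n] h) x = ((2 * (Fintype.card K : ℝ)) ^ n)⁻¹ •
        ∑ k : Fin n → K,
          h (∑ S ∈ (univ : Finset (Fin n)).powerset, (∏ i ∈ S, k i) • x) := by
    intro n
    induction n with
    | zero =>
      intro x
      simp
    | succ n ih =>
      intro x
      rw [Function.iterate_succ_apply', hJ]
      have : ∀ a : K, (J^[n] h) (x + a • x) =
          ((2 * (Fintype.card K : ℝ)) ^ n)⁻¹ •
          ∑ k : Fin n → K,
            h (∑ S ∈ (univ : Finset (Fin (n+1))).powerset,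
              (∏ i ∈ S, Fin.cons a k i) • x) := by
        intro a
        rw [ih (x + a • x)]
        congr 1
        refine Finset.sum_congr rfl fun k _ => ?_
        rw [key_cons]
      simp only [this]
      rw [← Finset.smul_sum, smul_smul, ← mul_inv, ← pow_succ']
      congr 1
      rw [← (Fin.consEquiv (fun _ : Fin (n+1) => K)).sum_comp
        (fun k : Fin (n+1) → K => h (∑ S ∈ (univ : Finset (Fin (n+1))).powerset,
          (∏ i ∈ S, k i) • x))]
      rw [Fintype.sum_prod_type]
      rfl
  intro n _ x
  rw [main n x]
  congr 1
  refine Finset.sum_congr rfl fun k _ => ?_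
  rw [erase_to_full]
end
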